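/- arXiv:1903.09859 — 2 statements merged into one kernel-verified Lean document; each statement's English description precedes it below -/
import Mathlib

section
/- Let τ > 0, ψ₀ ∈ (-π/2, π/2), K₁ : ℝ → ℝ continuous, nonnegative, supported in [-1,1] with ∫_{-1}^{1} K₁ = 1 and K₁ > 0 on (-1,1), and K₂ : ℝ → ℝ continuous, odd, supported in [-1,1] with ∫₀¹ K₂ = 1 and K₂ > 0 on (0,1). For ψ ∈ (-π/2, π/2) with ψ₀ − ψ ≠ ±π/2 and w ∈ ℝ define M(w,ψ) = -τ ∫_{-1}^{1} K₁(y) K̄₂(a(ψ) y + b(w,ψ)) dy, where a(ψ) = tan(ψ₀ − ψ), b(w,ψ) = w cos(ψ₀)/cos(ψ₀ − ψ), and K̄₂(y) = ∫_{-1}^{y} K₂. Then M(0, ψ₀) = τ and M(w,ψ) < τ for all (w,ψ) ≠ (0, ψ₀); that is, (0,ψ₀) is the unique maximizer of M. -/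
open Real Set intervalIntegral

/-! With `K̄₂(z) = ∫_{-1}^z K₂`, oddness of `K₂` and `∫_0^1 K₂ = 1` give `K̄₂(z) = ∫_0^z K₂ - 1`,
and `∫_0^z K₂ > 0` for `z ≠ 0` because `K₂ > 0` on `(0, 1)`. Since `∫ K₁ = 1`,
`M(w, ψ) = τ - τ ∫ K₁(y) ∫_0^{a y + b} K₂`, where the last integrand is continuous and nonnegative.
Unless `a = b = 0`, i.e. `(w, ψ) = (0, ψ₀)`, it is positive at some `y ∈ (-1, 1)`, so `M < τ`. -/

theorem intervalIntegral_pos_of_continuous_of_nonneg {f : ℝ → ℝ} {a b x₀ : ℝ}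
    (hf : Continuous f) (hnonneg : ∀ x ∈ Ioc a b, 0 ≤ f x) (hx₀ : x₀ ∈ Ioo a b)
    (hfx₀ : f x₀ ≠ 0) : 0 < ∫ x in a..b, f x := by
  have hab : a < b := hx₀.1.trans hx₀.2
  have hae : 0 ≤ᵐ[MeasureTheory.volume.restrict (uIoc a b)] f := by
    rw [uIoc_of_le hab.le]
    exact MeasureTheory.ae_restrict_of_forall_mem measurableSet_Ioc hnonneg
  rw [integral_pos_iff_support_of_nonneg_ae' hae (hf.intervalIntegrable a b)]
  have hopen : 0 < MeasureTheory.volume (Function.support f ∩ Ioo a b) :=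
    (hf.isOpen_support.inter isOpen_Ioo).measure_pos _ ⟨x₀, hfx₀, hx₀⟩
  exact ⟨hab, hopen.trans_le
    (MeasureTheory.measure_mono (inter_subset_inter_right _ Ioo_subset_Ioc_self))⟩

theorem integral_zero_neg_of_odd {f : ℝ → ℝ} (hodd : ∀ x, f (-x) = -f x) (z : ℝ) :
    ∫ x in (0 : ℝ)..-z, f x = ∫ x in (0 : ℝ)..z, f x := by
  have h := integral_comp_neg (a := 0) (b := -z) f
  simp only [hodd, intervalIntegral.integral_neg, neg_neg, neg_zero] at h
  rw [← neg_inj, h, integral_symm]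

theorem nonneg_of_pos_on_Ioo_of_eq_zero_off_Icc {K : ℝ → ℝ} (hcont : Continuous K)
    (hsupp : ∀ x, x ∉ Icc (-1 : ℝ) 1 → K x = 0) (hpos : ∀ x ∈ Ioo (0 : ℝ) 1, 0 < K x)
    {x : ℝ} (hx : 0 ≤ x) : 0 ≤ K x := by
  by_cases hx1 : x ≤ 1
  · have hsub : Icc (0 : ℝ) 1 ⊆ {x | 0 ≤ K x} := by
      rw [← closure_Ioo zero_ne_one]
      exact closure_minimal (fun y hy => (hpos y hy).le) (isClosed_le continuous_const hcont)
    exact hsub ⟨hx, hx1⟩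
  · exact (hsupp x fun h => hx1 h.2).ge

theorem integral_zero_pos_of_odd {K : ℝ → ℝ} (hcont : Continuous K) (hodd : ∀ x, K (-x) = -K x)
    (hsupp : ∀ x, x ∉ Icc (-1 : ℝ) 1 → K x = 0) (hpos : ∀ x ∈ Ioo (0 : ℝ) 1, 0 < K x)
    {z : ℝ} (hz : z ≠ 0) : 0 < ∫ t in (0 : ℝ)..z, K t := by
  wlog hz₀ : 0 < z generalizing z
  · rw [← integral_zero_neg_of_odd hodd]
    exact this (neg_ne_zero.2 hz) (by linarith [hz.lt_of_le (not_lt.1 hz₀)])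
  have hm : min z 1 / 2 ∈ Ioo 0 (min z 1) := by constructor <;> linarith [lt_min hz₀ one_pos]
  refine intervalIntegral_pos_of_continuous_of_nonneg hcont
    (fun x hx => nonneg_of_pos_on_Ioo_of_eq_zero_off_Icc hcont hsupp hpos hx.1.le)
    ⟨hm.1, hm.2.trans_le (min_le_left z 1)⟩ (hpos _ ⟨hm.1, hm.2.trans_le (min_le_right z 1)⟩).ne'

theorem integral_zero_nonneg_of_odd {K : ℝ → ℝ} (hcont : Continuous K) (hodd : ∀ x, K (-x) = -K x)
    (hsupp : ∀ x, x ∉ Icc (-1 : ℝ) 1 → K x = 0) (hpos : ∀ x ∈ Ioo (0 : ℝ) 1, 0 < K x)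
    (z : ℝ) : 0 ≤ ∫ t in (0 : ℝ)..z, K t := by
  rcases eq_or_ne z 0 with rfl | hz
  · rw [integral_same]
  · exact (integral_zero_pos_of_odd hcont hodd hsupp hpos hz).le

theorem integral_neg_one_eq_of_odd {K : ℝ → ℝ} (hcont : Continuous K) (hodd : ∀ x, K (-x) = -K x)
    (hint : ∫ t in (0 : ℝ)..1, K t = 1) (z : ℝ) :
    ∫ t in (-1 : ℝ)..z, K t = (∫ t in (0 : ℝ)..z, K t) - 1 := by
  rw [← integral_add_adjacent_intervals (hcont.intervalIntegrable (-1) 0)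
    (hcont.intervalIntegrable 0 z), integral_symm, integral_zero_neg_of_odd hodd, hint]
  ring

-- `tan = sin / cos` takes the junk value `0` at `±π / 2`.
theorem tan_ne_zero_of_mem_Ioo {θ : ℝ} (hθ : θ ∈ Ioo (-π) π) (h₀ : θ ≠ 0) (h₁ : θ ≠ π / 2)
    (h₂ : θ ≠ -(π / 2)) : tan θ ≠ 0 := by
  rw [tan_ne_zero_iff]
  rintro k rfl
  have hk₁ : (k : ℝ) < 2 := by nlinarith [hθ.2, pi_pos]
  have hk₂ : (-2 : ℝ) < k := by nlinarith [hθ.1, pi_pos]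
  obtain rfl | rfl | rfl : k = -1 ∨ k = 0 ∨ k = 1 := by
    have : k < 2 := by exact_mod_cast hk₁
    have : -2 < k := by exact_mod_cast hk₂
    omega
  · exact h₂ (by push_cast; ring)
  · exact h₀ (by simp)
  · exact h₁ (by simp)

theorem exists_mem_Ioo_mul_add_ne_zero {a b : ℝ} (hab : a ≠ 0 ∨ b ≠ 0) :
    ∃ y ∈ Ioo (-1 : ℝ) 1, a * y + b ≠ 0 := by
  by_cases hb : b = 0
  · exact ⟨1 / 2, by norm_num, by simpa [hb] using hab⟩
  · exact ⟨0, by norm_num, by simpa using hb⟩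

theorem continuous_mul_integral_zero_mul_add {K₁ K₂ : ℝ → ℝ} (hK₁ : Continuous K₁)
    (hK₂ : Continuous K₂) (a b : ℝ) :
    Continuous fun y => K₁ y * ∫ t in (0 : ℝ)..a * y + b, K₂ t :=
  hK₁.mul ((continuous_primitive (fun _ _ => hK₂.intervalIntegrable _ _) 0).comp
    (continuous_const.mul continuous_id |>.add continuous_const))

theorem integral_mul_integral_zero_pos {K₁ K₂ : ℝ → ℝ} (hK₁cont : Continuous K₁)
    (hK₁nonneg : ∀ x, 0 ≤ K₁ x) (hK₁pos : ∀ x ∈ Ioo (-1 : ℝ) 1, 0 < K₁ x)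
    (hK₂cont : Continuous K₂) (hK₂odd : ∀ x, K₂ (-x) = -K₂ x)
    (hK₂supp : ∀ x, x ∉ Icc (-1 : ℝ) 1 → K₂ x = 0) (hK₂pos : ∀ x ∈ Ioo (0 : ℝ) 1, 0 < K₂ x)
    {a b : ℝ} (hab : a ≠ 0 ∨ b ≠ 0) :
    0 < ∫ y in (-1 : ℝ)..1, K₁ y * ∫ t in (0 : ℝ)..a * y + b, K₂ t := by
  obtain ⟨y₀, hy₀, hy₀ne⟩ := exists_mem_Ioo_mul_add_ne_zero hab
  refine intervalIntegral_pos_of_continuous_of_nonneg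
    (continuous_mul_integral_zero_mul_add hK₁cont hK₂cont a b) (fun y _ => ?_) hy₀ ?_
  · exact mul_nonneg (hK₁nonneg y) (integral_zero_nonneg_of_odd hK₂cont hK₂odd hK₂supp hK₂pos _)
  · exact (mul_pos (hK₁pos y₀ hy₀)
      (integral_zero_pos_of_odd hK₂cont hK₂odd hK₂supp hK₂pos hy₀ne)).ne'

theorem stmt_4_general (τ ψ₀ : ℝ) (hτ : 0 < τ) (hψ₀ : ψ₀ ∈ Set.Ioo (-(π / 2)) (π / 2))
    (K₁ K₂ : ℝ → ℝ) (hK₁cont : Continuous K₁) (hK₁nonneg : ∀ x, 0 ≤ K₁ x)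
    (hK₁int : (∫ x in (-1 : ℝ)..1, K₁ x) = 1)
    (hK₁pos : ∀ x ∈ Set.Ioo (-1 : ℝ) 1, 0 < K₁ x)
    (hK₂cont : Continuous K₂) (hK₂odd : ∀ x, K₂ (-x) = -K₂ x)
    (hK₂supp : ∀ x, x ∉ Set.Icc (-1 : ℝ) 1 → K₂ x = 0)
    (hK₂int : (∫ x in (0 : ℝ)..1, K₂ x) = 1)
    (hK₂pos : ∀ x ∈ Set.Ioo (0 : ℝ) 1, 0 < K₂ x)
    (M : ℝ → ℝ → ℝ)
    (hM : ∀ w ψ, M w ψ =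
      -τ * ∫ y in (-1 : ℝ)..1, K₁ y *
        (∫ t in (-1 : ℝ)..(Real.tan (ψ₀ - ψ) * y + w * Real.cos ψ₀ / Real.cos (ψ₀ - ψ)),
          K₂ t)) :
    M 0 ψ₀ = τ ∧
    (∀ w ψ, ψ ∈ Set.Ioo (-(π / 2)) (π / 2) → ψ₀ - ψ ≠ π / 2 → ψ₀ - ψ ≠ -(π / 2) →
      (w, ψ) ≠ ((0 : ℝ), ψ₀) → M w ψ < τ) := by
  have hM' : ∀ w ψ, M w ψ = τ - τ * ∫ y in (-1 : ℝ)..1, K₁ y *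
      ∫ t in (0 : ℝ)..(tan (ψ₀ - ψ) * y + w * cos ψ₀ / cos (ψ₀ - ψ)), K₂ t := by
    intro w ψ
    simp_rw [hM, integral_neg_one_eq_of_odd hK₂cont hK₂odd hK₂int, mul_sub, mul_one]
    rw [integral_sub
      ((continuous_mul_integral_zero_mul_add hK₁cont hK₂cont _ _).intervalIntegrable _ _)
      (hK₁cont.intervalIntegrable _ _), hK₁int]
    ring
  refine ⟨by simp [hM'], fun w ψ hψ h₁ h₂ hne => ?_⟩
  have hab : tan (ψ₀ - ψ) ≠ 0 ∨ w * cos ψ₀ / cos (ψ₀ - ψ) ≠ 0 := by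
    by_cases hψψ₀ : ψ = ψ₀
    · subst hψψ₀
      have hw : w ≠ 0 := fun hw => hne (by rw [hw])
      exact Or.inr (by simpa [hw] using (cos_pos_of_mem_Ioo hψ).ne')
    · refine Or.inl (tan_ne_zero_of_mem_Ioo ⟨?_, ?_⟩ (sub_ne_zero.2 (Ne.symm hψψ₀)) h₁ h₂) <;>
        linarith [hψ.1, hψ.2, hψ₀.1, hψ₀.2]
  rw [hM']
  linarith [mul_pos hτ (integral_mul_integral_zero_pos hK₁cont hK₁nonneg hK₁pos hK₂cont hK₂odd
    hK₂supp hK₂pos hab)]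

/-- Uniqueness of the maximizer `(0, ψ₀)` of the asymptotic contrast function
`M(w,ψ) = -τ ∫ K₁(y) K̄₂(a(ψ) y + b(w,ψ)) dy` of the rotated difference kernel
estimator. -/
theorem stmt_4 (τ ψ₀ : ℝ) (hτ : 0 < τ) (hψ₀ : ψ₀ ∈ Set.Ioo (-(π / 2)) (π / 2))
    (K₁ K₂ : ℝ → ℝ) (hK₁cont : Continuous K₁) (hK₁nonneg : ∀ x, 0 ≤ K₁ x)
    (hK₁supp : ∀ x, x ∉ Set.Icc (-1 : ℝ) 1 → K₁ x = 0)
    (hK₁int : (∫ x in (-1 : ℝ)..1, K₁ x) = 1)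
    (hK₁pos : ∀ x ∈ Set.Ioo (-1 : ℝ) 1, 0 < K₁ x)
    (hK₂cont : Continuous K₂) (hK₂odd : ∀ x, K₂ (-x) = -K₂ x)
    (hK₂supp : ∀ x, x ∉ Set.Icc (-1 : ℝ) 1 → K₂ x = 0)
    (hK₂int : (∫ x in (0 : ℝ)..1, K₂ x) = 1)
    (hK₂pos : ∀ x ∈ Set.Ioo (0 : ℝ) 1, 0 < K₂ x)
    (M : ℝ → ℝ → ℝ)
    (hM : ∀ w ψ, M w ψ =
      -τ * ∫ y in (-1 : ℝ)..1, K₁ y *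
        (∫ t in (-1 : ℝ)..(Real.tan (ψ₀ - ψ) * y + w * Real.cos ψ₀ / Real.cos (ψ₀ - ψ)),
          K₂ t)) :
    M 0 ψ₀ = τ ∧
    (∀ w ψ, ψ ∈ Set.Ioo (-(π / 2)) (π / 2) → ψ₀ - ψ ≠ π / 2 → ψ₀ - ψ ≠ -(π / 2) →
      (w, ψ) ≠ ((0 : ℝ), ψ₀) → M w ψ < τ) :=
  stmt_4_general τ ψ₀ hτ hψ₀ K₁ K₂ hK₁cont hK₁nonneg hK₁int hK₁pos hK₂cont hK₂odd hK₂supp hK₂int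
    hK₂pos M hM
end

section
/- For any nonempty index set I, functions f_n, f : Θ × I → ℝ with Θ ⊆ ℝ^d compact, θ₀ : I → Θ, and estimators θ̂_n : I → Θ, suppose (i) sup_{(θ,x) ∈ Θ × I} |f_n(θ,x) − f(θ,x)| → 0, (ii) for every ε > 0, inf_{x ∈ I} [ f(θ₀(x),x) − sup_{θ : |θ − θ₀(x)| ≥ ε} f(θ,x) ] > 0, and (iii) inf_{x ∈ I} [ f_n(θ̂_n(x),x) − f_n(θ₀(x),x) ] ≥ −ε_n with ε_n → 0. Then sup_{x ∈ I} |θ̂_n(x) − θ₀(x)| → 0. -/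
/-!
If `θ̂` were `ε`-far from `θ₀`, well-separation would put `f θ̂` at least `δ` below `f θ₀`.
Once `f_n` is uniformly `δ/4`-close to `f` and the slack `ε_n` is below `δ/4`, near-maximality
of `θ̂` for `f_n` keeps `f θ̂` within `3δ/4` of `f θ₀`, which is a contradiction.
-/

open Set Filter Topology

theorem norm_sub_lt_of_almost_maximizes {E : Type*} [SeminormedAddCommGroup E]
    {f g : E → ℝ} {θ θ₀ : E} {ε δ η slack : ℝ}
    (hsep : ε ≤ ‖θ - θ₀‖ → f θ ≤ f θ₀ - δ)
    (hclose : |g θ - f θ| ≤ η) (hclose₀ : |g θ₀ - f θ₀| ≤ η)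
    (hmax : g θ₀ - slack ≤ g θ) (hsmall : 2 * η + slack < δ) :
    ‖θ - θ₀‖ < ε := by
  by_contra! hfar
  have hgap := hsep hfar
  rw [abs_le] at hclose hclose₀
  linarith [hclose.1, hclose₀.2]

theorem stmt_12_general {d : ℕ} {I : Type*}
    (Θ : Set (EuclideanSpace ℝ (Fin d)))
    (f_n : ℕ → EuclideanSpace ℝ (Fin d) → I → ℝ)
    (f : EuclideanSpace ℝ (Fin d) → I → ℝ)
    (θ₀ : I → EuclideanSpace ℝ (Fin d)) (hθ₀ : ∀ x, θ₀ x ∈ Θ)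
    (θhat : ℕ → I → EuclideanSpace ℝ (Fin d)) (hθhat : ∀ n x, θhat n x ∈ Θ)
    (hunif : ∀ ε > 0, ∃ N : ℕ, ∀ n ≥ N, ∀ θ ∈ Θ, ∀ x : I,
      |f_n n θ x - f θ x| ≤ ε)
    (hsep : ∀ ε > 0, ∃ δ > 0, ∀ x : I, ∀ θ ∈ Θ,
      ε ≤ ‖θ - θ₀ x‖ → f θ x ≤ f (θ₀ x) x - δ)
    (ε_n : ℕ → ℝ) (hε_n : Filter.Tendsto ε_n Filter.atTop (nhds 0))
    (hmax : ∀ n : ℕ, ∀ x : I, f_n n (θ₀ x) x - ε_n n ≤ f_n n (θhat n x) x) :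
    ∀ ε > 0, ∃ N : ℕ, ∀ n ≥ N, ∀ x : I, ‖θhat n x - θ₀ x‖ ≤ ε := by
  intro ε hε
  obtain ⟨δ, hδ, hsep⟩ := hsep ε hε
  obtain ⟨N₁, hunif⟩ := hunif (δ / 4) (by positivity)
  obtain ⟨N₂, hslack⟩ :=
    eventually_atTop.mp (hε_n.eventually (gt_mem_nhds (by positivity : (0 : ℝ) < δ / 4)))
  refine ⟨max N₁ N₂, fun n hn x => ?_⟩
  have hN₁ : N₁ ≤ n := le_of_max_le_left hn
  have hslack_n : ε_n n < δ / 4 := hslack n (le_of_max_le_right hn)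
  refine (norm_sub_lt_of_almost_maximizes (f := (f · x)) (g := (f_n n · x))
    (hsep x _ (hθhat n x)) (hunif n hN₁ _ (hθhat n x) x) (hunif n hN₁ _ (hθ₀ x) x)
    (hmax n x) ?_).le
  linarith

/-- Deterministic core of uniform M-estimation consistency: uniform convergence of
criterion functions plus a uniformly well-separated maximum imply uniform convergence
of near-maximizers. -/
theorem stmt_12 {d : ℕ} {I : Type*} [Nonempty I]
    (Θ : Set (EuclideanSpace ℝ (Fin d))) (hΘ : IsCompact Θ)
    (f_n : ℕ → EuclideanSpace ℝ (Fin d) → I → ℝ)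
    (f : EuclideanSpace ℝ (Fin d) → I → ℝ)
    (θ₀ : I → EuclideanSpace ℝ (Fin d)) (hθ₀ : ∀ x, θ₀ x ∈ Θ)
    (θhat : ℕ → I → EuclideanSpace ℝ (Fin d)) (hθhat : ∀ n x, θhat n x ∈ Θ)
    (hunif : ∀ ε > 0, ∃ N : ℕ, ∀ n ≥ N, ∀ θ ∈ Θ, ∀ x : I,
      |f_n n θ x - f θ x| ≤ ε)
    (hsep : ∀ ε > 0, ∃ δ > 0, ∀ x : I, ∀ θ ∈ Θ,
      ε ≤ ‖θ - θ₀ x‖ → f θ x ≤ f (θ₀ x) x - δ)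
    (ε_n : ℕ → ℝ) (hε_n : Filter.Tendsto ε_n Filter.atTop (nhds 0))
    (hmax : ∀ n : ℕ, ∀ x : I, f_n n (θ₀ x) x - ε_n n ≤ f_n n (θhat n x) x) :
    ∀ ε > 0, ∃ N : ℕ, ∀ n ≥ N, ∀ x : I, ‖θhat n x - θ₀ x‖ ≤ ε :=
  stmt_12_general Θ f_n f θ₀ hθ₀ θhat hθhat hunif hsep ε_n hε_n hmax
end
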